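/- arXiv:math/0106176 — 3 statements merged into one kernel-verified Lean document; each statement's English description precedes it below -/
import Mathlib

section
/- For every ε > 0 there exist δ > 0 and X_0 such that the following holds. Let X ≥ X_0 and X < Y ≤ X², and let f : ℕ → ℂ be completely multiplicative with |f(p)| ≤ 1 for every prime p, satisfying |∑_{n ≤ x} f(n)| ≤ δ·x for every real x with X < x ≤ Y. Define h(n) = ∑_{ab = n} f(a)·conj(f(b)) (sum over ordered pairs of positive integers a, b with ab = n). Then |∑_{n ≤ Y} h(n)| ≤ Y·log(X²/Y) + ε·Y·log Y. -/
/-!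
Write `S(x) = ∑_{n ≤ x} f(n)`; complete multiplicativity gives `|f(n)| ≤ 1`, so `|S(x)| ≤ x`.
The Dirichlet hyperbola method with `K = ⌊√Y⌋` gives
`∑_{n ≤ Y} h(n) = ∑_{a ≤ K} f(a) conj S(Y/a) + ∑_{b ≤ K} conj f(b) S(Y/b) - S(K) conj S(K)`.
For `a < Y/X` the point `Y/a` lies in `(X, Y]`, so `|S(Y/a)| ≤ δY/a`, and these terms cost
`O(δ Y log Y)`. For `Y/X ≤ a ≤ √Y` only the trivial bound `Y/a` is available; summed, it gives
`Y log(√Y · X/Y) + O(Y) = (Y/2) log(X²/Y) + O(Y)` in each of the two sums. The corner term is at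
most `K² ≤ Y`, and the remaining `O(Y)` is absorbed by `ε Y log Y` once `log Y ≥ 2 + 6/ε`.
-/

open Finset Real

theorem norm_le_one_of_map_mul {R : Type*} [SeminormedRing R] [NormOneClass R] {f : ℕ → R}
    (h1 : f 1 = 1) (hmul : ∀ m n : ℕ, 0 < m → 0 < n → f (m * n) = f m * f n)
    (hp : ∀ p : ℕ, p.Prime → ‖f p‖ ≤ 1) {n : ℕ} (hn : 0 < n) : ‖f n‖ ≤ 1 := by
  induction n using Nat.recOnMul with
  | zero => exact absurd hn (lt_irrefl 0)
  | one => simp [h1]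
  | prime p hp' => exact hp p hp'
  | mul a b ha hb =>
    have ha0 := Nat.pos_of_mul_pos_right hn
    have hb0 := Nat.pos_of_mul_pos_left hn
    rw [hmul a b ha0 hb0]
    exact (norm_mul_le _ _).trans (mul_le_one₀ (ha ha0) (norm_nonneg _) (hb hb0))

theorem norm_sum_mul_le_of_norm_le_one {ι R : Type*} [SeminormedRing R] {s : Finset ι}
    {u v : ι → R} {B : ι → ℝ} (hu : ∀ i ∈ s, ‖u i‖ ≤ 1) (hv : ∀ i ∈ s, ‖v i‖ ≤ B i) :
    ‖∑ i ∈ s, u i * v i‖ ≤ ∑ i ∈ s, B i :=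
  norm_sum_le_of_le s fun i hi ↦ (norm_mul_le _ _).trans <|
    (mul_le_of_le_one_left (norm_nonneg _) (hu i hi)).trans (hv i hi)

section Hyperbola

variable {R : Type*} [CommRing R]

theorem sum_Icc_sum_divisors_eq_sum_mul_le (f g : ℕ → R) (N : ℕ) :
    ∑ n ∈ Icc 1 N, ∑ d ∈ n.divisors, f d * g (n / d) =
      ∑ x ∈ Icc 1 N ×ˢ Icc 1 N with x.1 * x.2 ≤ N, f x.1 * g x.2 := by
  rw [← sum_fiberwise_of_maps_to (g := fun x : ℕ × ℕ ↦ x.1 * x.2) (t := Icc 1 N)]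
  · refine sum_congr rfl fun n hn ↦ ?_
    obtain ⟨hn1, hnN⟩ := mem_Icc.1 hn
    rw [← Nat.sum_divisorsAntidiagonal (fun a b ↦ f a * g b), filter_filter,
      Nat.divisorsAntidiagonal_eq_prod_filter_of_le (by omega) hnN]
    refine sum_congr (filter_congr fun x _ ↦ ?_) fun _ _ ↦ rfl
    exact ⟨fun h ↦ ⟨h ▸ hnN, h⟩, fun h ↦ h.2⟩
  · intro x hx
    simp only [mem_filter, mem_product, mem_Icc] at hx ⊢
    exact ⟨Nat.mul_pos hx.1.1.1 hx.1.2.1, hx.2⟩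

theorem mem_Icc_prod_mul_le_and_fst_le_iff {N K a b : ℕ} :
    ((a, b) ∈ Icc 1 N ×ˢ Icc 1 N ∧ a * b ≤ N ∧ a ≤ K) ↔ a ∈ Icc 1 K ∧ b ∈ Icc 1 (N / a) := by
  simp only [mem_product, mem_Icc]
  constructor
  · rintro ⟨⟨⟨ha, -⟩, hb, -⟩, hab, haK⟩
    exact ⟨⟨ha, haK⟩, hb, (Nat.le_div_iff_mul_le ha).2 (by rwa [mul_comm])⟩
  · rintro ⟨⟨ha, haK⟩, hb, hbN⟩
    have hab : a * b ≤ N := by rw [mul_comm]; exact (Nat.le_div_iff_mul_le ha).1 hbN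
    exact ⟨⟨⟨ha, (Nat.le_mul_of_pos_right a hb).trans hab⟩, hb,
      (Nat.le_mul_of_pos_left b ha).trans hab⟩, hab, haK⟩

theorem sum_Icc_sum_divisors_eq_hyperbola (f g : ℕ → R) (N : ℕ) :
    ∑ n ∈ Icc 1 N, ∑ d ∈ n.divisors, f d * g (n / d) =
      ∑ a ∈ Icc 1 N.sqrt, f a * ∑ b ∈ Icc 1 (N / a), g b
        + ∑ b ∈ Icc 1 N.sqrt, g b * ∑ a ∈ Icc 1 (N / b), f a
        - (∑ a ∈ Icc 1 N.sqrt, f a) * ∑ b ∈ Icc 1 N.sqrt, g b := by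
  rw [sum_Icc_sum_divisors_eq_sum_mul_le, eq_sub_iff_add_eq]
  set K := N.sqrt
  set P := {x ∈ Icc 1 N ×ˢ Icc 1 N | x.1 * x.2 ≤ N}
  have hunion : {x ∈ P | x.1 ≤ K} ∪ {x ∈ P | x.2 ≤ K} = P := by
    refine (filter_or _ _ _).symm.trans (filter_true_of_mem fun x hx ↦ ?_)
    by_contra! hK
    exact (Nat.lt_succ_sqrt N).not_ge ((Nat.mul_le_mul hK.1 hK.2).trans (mem_filter.1 hx).2)
  have hinter : {x ∈ P | x.1 ≤ K} ∩ {x ∈ P | x.2 ≤ K} = Icc 1 K ×ˢ Icc 1 K := by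
    ext ⟨a, b⟩
    simp only [P, mem_inter, mem_filter, mem_product, mem_Icc]
    have hKN : K * K ≤ N := Nat.sqrt_le N
    have hK : K ≤ N := Nat.sqrt_le_self N
    constructor
    · tauto
    · rintro ⟨⟨ha, haK⟩, hb, hbK⟩
      have hab : a * b ≤ N := (Nat.mul_le_mul haK hbK).trans hKN
      omega
  have hfst : ∑ x ∈ P with x.1 ≤ K, f x.1 * g x.2 =
      ∑ a ∈ Icc 1 K, f a * ∑ b ∈ Icc 1 (N / a), g b := by
    simp only [P, filter_filter, mul_sum]
    exact sum_finset_product _ _ _ fun _ ↦ mem_filter.trans mem_Icc_prod_mul_le_and_fst_le_iff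
  have hsnd : ∑ x ∈ P with x.2 ≤ K, f x.1 * g x.2 =
      ∑ b ∈ Icc 1 K, g b * ∑ a ∈ Icc 1 (N / b), f a := by
    simp only [P, filter_filter, mul_sum, mul_comm (g _) (f _)]
    refine sum_finset_product_right _ _ _ fun ⟨a, b⟩ ↦ ?_
    simp only [mem_filter, ← mem_Icc_prod_mul_le_and_fst_le_iff, mem_product, mul_comm b a,
      and_comm (a := a ∈ Icc 1 N)]
  rw [sum_mul_sum, ← sum_product', ← hinter, ← hfst, ← hsnd,
    ← sum_union_inter (s₁ := {x ∈ P | x.1 ≤ K}), hunion]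

end Hyperbola

theorem sum_Icc_inv_le_one_add_log_sub_log {m K : ℕ} (hm : 0 < m) (hmK : m ≤ K + 1) :
    ∑ a ∈ Icc m K, (a : ℝ)⁻¹ ≤ 1 + log K - log m := by
  have hsplit := sum_Ico_consecutive (fun a : ℕ ↦ (a : ℝ)⁻¹) hm hmK
  obtain ⟨j, rfl⟩ : ∃ j, m = j + 1 := ⟨m - 1, by omega⟩
  simp only [Ico_add_one_right_eq_Icc] at hsplit
  have hlower : log ↑(j + 1) ≤ ∑ a ∈ Icc 1 j, (a : ℝ)⁻¹ := by
    simpa [harmonic_eq_sum_Icc] using log_add_one_le_harmonic j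
  have hupper : ∑ a ∈ Icc 1 K, (a : ℝ)⁻¹ ≤ 1 + log K := by
    simpa [harmonic_eq_sum_Icc] using harmonic_le_one_add_log K
  linarith

theorem sum_Icc_mul_div_add_ite_le {K : ℕ} {δ Y t : ℝ} (hδ : 0 ≤ δ) (hY : 0 ≤ Y) (ht : 0 < t)
    (htK : t ≤ K + 1) :
    ∑ a ∈ Icc 1 K, (δ * Y / a + if ⌈t⌉₊ ≤ a then Y / a else 0) ≤
      δ * Y * (1 + log K) + Y * (1 + log K - log t) := by
  have hm : 0 < ⌈t⌉₊ := Nat.ceil_pos.2 ht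
  have hfilter : {a ∈ Icc 1 K | ⌈t⌉₊ ≤ a} = Icc ⌈t⌉₊ K := by
    ext a
    simp only [mem_filter, mem_Icc]
    omega
  rw [sum_add_distrib, ← sum_filter, hfilter]
  simp only [div_eq_mul_inv, ← mul_sum]
  have hharmonic := sum_Icc_inv_le_one_add_log_sub_log Nat.one_pos (Nat.le_add_left 1 K)
  have htail := sum_Icc_inv_le_one_add_log_sub_log hm (Nat.ceil_le.2 (by exact_mod_cast htK))
  have hlog : log t ≤ log ⌈t⌉₊ := log_le_log ht (Nat.le_ceil t)
  rw [Nat.cast_one, log_one, sub_zero] at hharmonic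
  gcongr
  linarith

section PartialSums

variable {E : Type*} [SeminormedAddCommGroup E] {f : ℕ → E}

theorem norm_sum_Icc_le_of_norm_le_one (hf : ∀ n, 0 < n → ‖f n‖ ≤ 1) (m : ℕ) :
    ‖∑ n ∈ Icc 1 m, f n‖ ≤ m :=
  (norm_sum_le_of_le _ fun n hn ↦ hf n (mem_Icc.1 hn).1).trans (by simp)

theorem norm_sum_Icc_floor_div_le {X Y δ : ℝ} (hX : 0 < X) (hY : 0 ≤ Y) (hδ : 0 ≤ δ)
    (hf : ∀ n, 0 < n → ‖f n‖ ≤ 1)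
    (hS : ∀ x : ℝ, X < x → x ≤ Y → ‖∑ n ∈ Icc 1 ⌊x⌋₊, f n‖ ≤ δ * x) {a : ℕ} (ha : 0 < a) :
    ‖∑ n ∈ Icc 1 (⌊Y⌋₊ / a), f n‖ ≤ δ * Y / a + if ⌈Y / X⌉₊ ≤ a then Y / a else 0 := by
  have ha' : (0 : ℝ) < a := Nat.cast_pos.2 ha
  split_ifs with haYX
  · calc ‖∑ n ∈ Icc 1 (⌊Y⌋₊ / a), f n‖ ≤ ((⌊Y⌋₊ / a : ℕ) : ℝ) := norm_sum_Icc_le_of_norm_le_one hf _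
      _ ≤ Y / a := by rw [← Nat.floor_div_natCast]; exact Nat.floor_le (by positivity)
      _ ≤ δ * Y / a + Y / a := le_add_of_nonneg_left (by positivity)
  · have hXa : X < Y / a := by
      rw [Nat.ceil_le, not_le, lt_div_iff₀ hX] at haYX
      rwa [lt_div_iff₀ ha', mul_comm]
    rw [add_zero, mul_div_assoc, ← Nat.floor_div_natCast]
    exact hS _ hXa (div_le_self hY (Nat.one_le_cast.2 ha))

end PartialSums

theorem sq_sqrt_floor_le {Y : ℝ} (hY : 0 ≤ Y) : ((⌊Y⌋₊.sqrt : ℕ) : ℝ) ^ 2 ≤ Y :=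
  le_trans (by exact_mod_cast Nat.sqrt_le' _) (Nat.floor_le hY)

theorem lt_sqrt_floor_add_one_sq (Y : ℝ) : Y < ((⌊Y⌋₊.sqrt : ℕ) + 1 : ℝ) ^ 2 :=
  (Nat.lt_floor_add_one Y).trans_le (by exact_mod_cast Nat.lt_succ_sqrt' _)

theorem norm_sum_Icc_sum_divisors_mul_conj_le {𝕜 : Type*} [RCLike 𝕜] {f : ℕ → 𝕜} {X Y δ : ℝ}
    (hX : 0 < X) (hY : 1 ≤ Y) (hYX : Y ≤ X ^ 2) (hδ : 0 ≤ δ) (hf : ∀ n, 0 < n → ‖f n‖ ≤ 1)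
    (hS : ∀ x : ℝ, X < x → x ≤ Y → ‖∑ n ∈ Icc 1 ⌊x⌋₊, f n‖ ≤ δ * x) :
    ‖∑ n ∈ Icc 1 ⌊Y⌋₊, ∑ d ∈ n.divisors, f d * starRingEnd 𝕜 (f (n / d))‖ ≤
      Y * log (X ^ 2 / Y) + δ * Y * log Y + (3 + 2 * δ) * Y := by
  set N := ⌊Y⌋₊
  set K := N.sqrt
  have hY0 : 0 < Y := by linarith
  have hK : 0 < K := Nat.sqrt_pos.2 (Nat.floor_pos.2 hY)
  have hKY : (K : ℝ) ^ 2 ≤ Y := sq_sqrt_floor_le hY0.le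
  have hlogK : log K ≤ log Y / 2 := by
    have := log_le_log (by positivity) hKY
    rw [log_pow, Nat.cast_ofNat] at this
    linarith
  -- `Y ≤ X²` means `Y / X ≤ √Y`: the range `a ≥ Y / X` of trivial bounds ends below `√Y`.
  have hYXK : Y / X ≤ K + 1 := by
    refine (lt_of_pow_lt_pow_left₀ 2 (by positivity) ?_).le
    refine lt_of_le_of_lt ?_ (lt_sqrt_floor_add_one_sq Y)
    rw [div_pow, div_le_iff₀ (by positivity)]
    nlinarith
  have hpartial : ∀ a ∈ Icc 1 K, ‖∑ n ∈ Icc 1 (N / a), f n‖ ≤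
      δ * Y / a + if ⌈Y / X⌉₊ ≤ a then Y / a else 0 := fun a ha ↦
    norm_sum_Icc_floor_div_le hX hY0.le hδ hf hS (mem_Icc.1 ha).1
  have hnorm_conj (s : Finset ℕ) : ‖∑ n ∈ s, starRingEnd 𝕜 (f n)‖ = ‖∑ n ∈ s, f n‖ := by
    rw [← map_sum, RCLike.norm_conj]
  have hf' : ∀ a ∈ Icc 1 K, ‖f a‖ ≤ 1 := fun a ha ↦ hf a (mem_Icc.1 ha).1
  have hf'_conj : ∀ a ∈ Icc 1 K, ‖starRingEnd 𝕜 (f a)‖ ≤ 1 := fun a ha ↦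
    (RCLike.norm_conj _).trans_le (hf' a ha)
  have hfirst :=
    norm_sum_mul_le_of_norm_le_one hf' fun a ha ↦ (hnorm_conj _).trans_le (hpartial a ha)
  have hsecond := norm_sum_mul_le_of_norm_le_one hf'_conj hpartial
  have hcorner : ‖(∑ a ∈ Icc 1 K, f a) * ∑ b ∈ Icc 1 K, starRingEnd 𝕜 (f b)‖ ≤ Y := by
    refine (norm_mul_le _ _).trans ?_
    rw [hnorm_conj]
    have := norm_sum_Icc_le_of_norm_le_one hf K
    nlinarith [norm_nonneg (∑ a ∈ Icc 1 K, f a)]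
  have hsum := sum_Icc_mul_div_add_ite_le hδ hY0.le (div_pos hY0 hX) hYXK
  rw [sum_Icc_sum_divisors_eq_hyperbola f fun n ↦ starRingEnd 𝕜 (f n)]
  refine (norm_sub_le_of_le (norm_add_le_of_le hfirst hsecond) hcorner).trans ?_
  rw [log_div hY0.ne' hX.ne'] at hsum
  rw [log_div (by positivity) hY0.ne', log_pow]
  have := mul_le_mul_of_nonneg_left hlogK hY0.le
  have := mul_le_mul_of_nonneg_left hlogK (mul_nonneg hδ hY0.le)
  push_cast
  linarith

theorem lemma5_GS (ε : ℝ) (hε : 0 < ε) :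
    ∃ δ > (0:ℝ), ∃ X₀ : ℝ, ∀ X Y : ℝ, X₀ ≤ X → X < Y → Y ≤ X ^ 2 →
      ∀ f : ℕ → ℂ,
        f 1 = 1 → (∀ m n : ℕ, 0 < m → 0 < n → f (m * n) = f m * f n) →
        (∀ p : ℕ, p.Prime → ‖f p‖ ≤ 1) →
        (∀ x : ℝ, X < x → x ≤ Y →
          ‖∑ n ∈ Finset.Icc 1 ⌊x⌋₊, f n‖ ≤ δ * x) →
        ∀ h : ℕ → ℂ,
          (∀ n : ℕ, h n = ∑ d ∈ n.divisors, f d * (starRingEnd ℂ) (f (n / d))) →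
          ‖∑ n ∈ Finset.Icc 1 ⌊Y⌋₊, h n‖
            ≤ Y * Real.log (X ^ 2 / Y) + ε * Y * Real.log Y := by
  refine ⟨ε / 2, by positivity, exp (2 + 6 / ε), fun X Y hX₀ hXY hYX f hf1 hmul hp hS h hh ↦ ?_⟩
  have hX : 0 < X := (exp_pos _).trans_le hX₀
  have hlogY : 2 + 6 / ε ≤ log Y := (le_log_iff_exp_le (hX.trans hXY)).2 (hX₀.trans hXY.le)
  have hY : 1 ≤ Y := (one_le_exp (by positivity)).trans (hX₀.trans hXY.le)
  have hf : ∀ n, 0 < n → ‖f n‖ ≤ 1 := fun n hn ↦ norm_le_one_of_map_mul hf1 hmul hp hn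
  simp only [hh]
  refine (norm_sum_Icc_sum_divisors_mul_conj_le hX hY hYX (by positivity) hf hS).trans ?_
  have hεlogY : 3 + 2 * (ε / 2) ≤ ε / 2 * log Y := by
    calc 3 + 2 * (ε / 2) = ε / 2 * (2 + 6 / ε) := by field_simp; ring
      _ ≤ ε / 2 * log Y := by gcongr
  linarith [mul_le_mul_of_nonneg_right hεlogY (hX.trans hXY).le]
end

section
/- Let 0 < δ ≤ 1 and let σ : [0,∞) → ℝ be a δ-solution. Then σ(u) = 1 − (1+δ)·log u for all 1 ≤ u ≤ 2. Moreover, if 1/log 2 − 1 ≤ δ ≤ 1, then σ(e^{1/(1+δ)}) = 0 and σ(u) > 0 for all 0 ≤ u < e^{1/(1+δ)}; that is, e^{1/(1+δ)} is the smallest positive zero of σ. -/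
open Finset

/-- `χ_δ(t) = 1` for `0 ≤ t ≤ 1` and `χ_δ(t) = −δ` for `t > 1`. -/
noncomputable def chiDelta (δ : ℝ) (t : ℝ) : ℝ := if t ≤ 1 then 1 else -δ

/-- `σ` is a `δ`-solution: continuous on `[0,∞)`, equal to `1` on `[0,1]`, and satisfying
`u·σ(u) = ∫_0^u σ(u−t)·χ_δ(t) dt` for `u > 1`. -/
def IsDeltaSolution (δ : ℝ) (σ : ℝ → ℝ) : Prop :=
  ContinuousOn σ (Set.Ici 0) ∧ (∀ u : ℝ, 0 ≤ u → u ≤ 1 → σ u = 1) ∧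
    ∀ u : ℝ, 1 < u → u * σ u = ∫ t in (0:ℝ)..u, σ (u - t) * chiDelta δ t


/-! Splitting the convolution at `t = 1` and using `σ = 1` on `[0,1]` turns the defining
equation on `(1,2]` into `u σ(u) = ∫₁ᵘ σ + (2 - u) - δ (u - 1)`. The same identity holds for
`φ(u) = 1 - (1 + δ) log u` with `∫₁ᵘ φ` in place of `∫₁ᵘ σ`, so `G(u) = ∫₁ᵘ (σ - φ)` satisfies
`u G' = G` and `G(1) = 0`; then `G(u)/u` is constant, `G = 0`, and `σ = φ` on `[1,2]`.
The condition `1/log 2 - 1 ≤ δ` says exactly that the zero `e^{1/(1+δ)}` of `φ` lies in `[1,2]`. -/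

open Set Real MeasureTheory

lemma chiDelta_of_le {δ t : ℝ} (ht : t ≤ 1) : chiDelta δ t = 1 := if_pos ht

lemma chiDelta_of_one_lt {δ t : ℝ} (ht : 1 < t) : chiDelta δ t = -δ := if_neg ht.not_ge

lemma intervalIntegrable_chiDelta (δ a b : ℝ) : IntervalIntegrable (chiDelta δ) volume a b := by
  refine (intervalIntegrable_const (c := 1 + |δ|)).mono_fun'
    (Measurable.ite measurableSet_Iic measurable_const measurable_const).aestronglyMeasurable
    (Filter.Eventually.of_forall fun t => ?_)
  simp only [chiDelta]
  split_ifs <;> simp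

theorem eq_zero_of_hasDerivAt_of_mul_deriv_eq_self {G G' : ℝ → ℝ} {a b : ℝ} (ha : 0 < a)
    (hG : ∀ x ∈ Icc a b, HasDerivAt G (G' x) x) (hGG' : ∀ x ∈ Icc a b, x * G' x = G x)
    (hGa : G a = 0) : ∀ x ∈ Icc a b, G x = 0 := by
  have hquot : ∀ x ∈ Icc a b, HasDerivAt (fun x => G x / x) 0 x := by
    intro x hx
    have hx0 : x ≠ 0 := (ha.trans_le hx.1).ne'
    have h := (hG x hx).div (hasDerivAt_id' x) hx0
    rwa [mul_one, mul_comm, hGG' x hx, sub_self, zero_div] at h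
  intro x hx
  have hconst := constant_of_has_deriv_right_zero
    (fun y hy => (hquot y hy).continuousAt.continuousWithinAt)
    (fun y hy => (hquot y (Ico_subset_Icc_self hy)).hasDerivWithinAt) x hx
  rw [hGa, zero_div, div_eq_zero_iff] at hconst
  exact hconst.resolve_right (ha.trans_le hx.1).ne'

namespace IsDeltaSolution

variable {δ : ℝ} {σ : ℝ → ℝ}

lemma intervalIntegrable (hσ : IsDeltaSolution δ σ) {a b : ℝ} (ha : 0 ≤ a) (hb : 0 ≤ b) :
    IntervalIntegrable σ volume a b :=
  (hσ.1.mono fun _ hx => (le_min ha hb).trans hx.1).intervalIntegrable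

lemma integral_of_le_one (hσ : IsDeltaSolution δ σ) {a b : ℝ} (ha : 0 ≤ a) (hab : a ≤ b)
    (hb : b ≤ 1) : ∫ s in a..b, σ s = b - a := by
  rw [intervalIntegral.integral_congr (g := fun _ => 1) fun s hs => ?_,
    intervalIntegral.integral_const, smul_eq_mul, mul_one]
  rw [Set.uIcc_of_le hab] at hs
  exact hσ.2.1 s (ha.trans hs.1) (hs.2.trans hb)

lemma mul_eq_integral_sub (hσ : IsDeltaSolution δ σ) {u : ℝ} (hu : 1 < u) :
    u * σ u = (∫ s in (u - 1)..u, σ s) - δ * ∫ s in (0 : ℝ)..(u - 1), σ s := by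
  have hσu : ContinuousOn (fun t => σ (u - t)) (uIcc 0 u) :=
    hσ.1.comp (continuous_const.sub continuous_id).continuousOn fun t ht => by
      rw [Set.uIcc_of_le (by linarith)] at ht
      exact sub_nonneg.2 ht.2
  have hint : ∀ a b, a ∈ uIcc 0 u → b ∈ uIcc 0 u →
      IntervalIntegrable (fun t => σ (u - t) * chiDelta δ t) volume a b := fun a b ha hb =>
    (intervalIntegrable_chiDelta δ a b).continuousOn_mul (hσu.mono (uIcc_subset_uIcc ha hb))
  have h0 : (0 : ℝ) ∈ uIcc 0 u := left_mem_uIcc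
  have h1 : (1 : ℝ) ∈ uIcc 0 u := by rw [Set.uIcc_of_le (by linarith)]; constructor <;> linarith
  have hu' : u ∈ uIcc 0 u := right_mem_uIcc
  have hnear : ∫ t in (0 : ℝ)..1, σ (u - t) * chiDelta δ t = ∫ t in (0 : ℝ)..1, σ (u - t) :=
    intervalIntegral.integral_congr fun t ht => by
      rw [Set.uIcc_of_le zero_le_one] at ht
      rw [chiDelta_of_le ht.2, mul_one]
  have hfar :
      ∫ t in (1 : ℝ)..u, σ (u - t) * chiDelta δ t = -δ * ∫ t in (1 : ℝ)..u, σ (u - t) := by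
    rw [← intervalIntegral.integral_const_mul]
    refine intervalIntegral.integral_congr_ae (Filter.Eventually.of_forall fun t ht => ?_)
    rw [Set.uIoc_of_le hu.le] at ht
    rw [chiDelta_of_one_lt ht.1, mul_comm]
  rw [hσ.2.2 u hu,
    ← intervalIntegral.integral_add_adjacent_intervals (hint 0 1 h0 h1) (hint 1 u h1 hu'),
    hnear, hfar, intervalIntegral.integral_comp_sub_left, intervalIntegral.integral_comp_sub_left]
  simp only [sub_zero, sub_self]
  ring

lemma mul_eq_integral_of_le_two (hσ : IsDeltaSolution δ σ) {u : ℝ} (hu1 : 1 ≤ u) (hu2 : u ≤ 2) :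
    u * σ u = (∫ s in (1 : ℝ)..u, σ s) + (2 - u) - δ * (u - 1) := by
  rcases hu1.eq_or_lt with rfl | hu1
  · norm_num [hσ.2.1 1 zero_le_one le_rfl]
  rw [hσ.mul_eq_integral_sub hu1, ← intervalIntegral.integral_add_adjacent_intervals
      (hσ.intervalIntegrable (a := u - 1) (b := 1) (by linarith) zero_le_one)
      (hσ.intervalIntegrable zero_le_one (by linarith)),
    hσ.integral_of_le_one (by linarith) (by linarith) (by linarith),
    hσ.integral_of_le_one le_rfl (by linarith) (by linarith)]
  ring

theorem eq_one_sub_mul_log (hσ : IsDeltaSolution δ σ) {u : ℝ} (hu1 : 1 ≤ u) (hu2 : u ≤ 2) :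
    σ u = 1 - (1 + δ) * log u := by
  set G : ℝ → ℝ := fun x => (∫ s in (1 : ℝ)..x, σ s) - ((x - 1) - (1 + δ) * (x * log x - x + 1))
  have hσpos : ContinuousOn σ (Ioi 0) := hσ.1.mono Ioi_subset_Ici_self
  have hG : ∀ x ∈ Icc (1 : ℝ) 2, HasDerivAt G (σ x - (1 - (1 + δ) * log x)) x := by
    intro x hx
    have hx0 : 0 < x := zero_lt_one.trans_le hx.1
    have hF : HasDerivAt (fun x => ∫ s in (1 : ℝ)..x, σ s) (σ x) x :=
      intervalIntegral.integral_hasDerivAt_right (hσ.intervalIntegrable zero_le_one hx0.le)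
        (hσpos.stronglyMeasurableAtFilter isOpen_Ioi x hx0)
        (hσpos.continuousAt (Ioi_mem_nhds hx0))
    exact (hF.sub (((hasDerivAt_id' x).sub_const 1).sub
      ((((hasDerivAt_mul_log hx0.ne').sub (hasDerivAt_id' x)).add_const 1).const_mul (1 + δ))))
      |>.congr_deriv (by ring)
  have hGG' : ∀ x ∈ Icc (1 : ℝ) 2, x * (σ x - (1 - (1 + δ) * log x)) = G x := fun x hx => by
    rw [mul_sub, hσ.mul_eq_integral_of_le_two hx.1 hx.2]
    ring
  have hGu := eq_zero_of_hasDerivAt_of_mul_deriv_eq_self zero_lt_one hG hGG' (by simp [G])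
    u ⟨hu1, hu2⟩
  rw [← hGG' u ⟨hu1, hu2⟩, mul_eq_zero, sub_eq_zero] at hGu
  exact hGu.resolve_left (by linarith)

end IsDeltaSolution

lemma exp_one_div_le_two {c : ℝ} (hc : 1 / log 2 ≤ c) : exp (1 / c) ≤ 2 := by
  have hlog2 : 0 < log 2 := log_pos one_lt_two
  rw [← le_log_iff_exp_le two_pos, one_div_le ((one_div_pos.2 hlog2).trans_le hc) hlog2]
  exact hc

theorem prop2_initial_segment_general (δ : ℝ)
    (σ : ℝ → ℝ) (hσ : IsDeltaSolution δ σ) :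
    (∀ u : ℝ, 1 ≤ u → u ≤ 2 → σ u = 1 - (1 + δ) * Real.log u) ∧
    (1 / Real.log 2 - 1 ≤ δ →
      σ (Real.exp (1 / (1 + δ))) = 0 ∧
      ∀ u : ℝ, 0 ≤ u → u < Real.exp (1 / (1 + δ)) → 0 < σ u) := by
  refine ⟨fun u hu1 hu2 => hσ.eq_one_sub_mul_log hu1 hu2, fun hδ => ?_⟩
  have hc : 1 / log 2 ≤ 1 + δ := by linarith
  have hpos : 0 < 1 + δ := (one_div_pos.2 (log_pos one_lt_two)).trans_le hc
  have hr1 : 1 ≤ exp (1 / (1 + δ)) := one_le_exp (by positivity)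
  have hr2 : exp (1 / (1 + δ)) ≤ 2 := exp_one_div_le_two hc
  refine ⟨?_, fun u hu0 hur => ?_⟩
  · rw [hσ.eq_one_sub_mul_log hr1 hr2, log_exp, mul_one_div_cancel hpos.ne', sub_self]
  rcases le_or_gt u 1 with hu1 | hu1
  · rw [hσ.2.1 u hu0 hu1]
    exact one_pos
  · have hlog : log u < 1 / (1 + δ) := (log_lt_iff_lt_exp (by linarith)).2 hur
    rw [hσ.eq_one_sub_mul_log hu1.le (hur.le.trans hr2), sub_pos]
    exact (lt_div_iff₀' hpos).1 hlog

theorem prop2_initial_segment (δ : ℝ) (hδ0 : 0 < δ) (hδ1 : δ ≤ 1)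
    (σ : ℝ → ℝ) (hσ : IsDeltaSolution δ σ) :
    (∀ u : ℝ, 1 ≤ u → u ≤ 2 → σ u = 1 - (1 + δ) * Real.log u) ∧
    (1 / Real.log 2 - 1 ≤ δ →
      σ (Real.exp (1 / (1 + δ))) = 0 ∧
      ∀ u : ℝ, 0 ≤ u → u < Real.exp (1 / (1 + δ)) → 0 < σ u) :=
  prop2_initial_segment_general δ σ hσ
end

section
/- Let 0 < δ ≤ 1 and let σ_δ be a δ-solution. Then for every real u ≥ 1, | σ_δ(u) − ( ρ(u) − δ·∫_1^u ρ(u−t)/t dt ) | ≤ δ², where ρ is the Dickman function. -/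
open Finset

/-- `ρ` is the Dickman function: continuous on `[0,∞)`, equal to `1` on `[0,1]`, and satisfying
`u·ρ(u) = ∫_{u−1}^u ρ(t) dt` for `u ≥ 1`. -/
def IsDickman (ρ : ℝ → ℝ) : Prop :=
  ContinuousOn ρ (Set.Ici 0) ∧ (∀ u : ℝ, 0 ≤ u → u ≤ 1 → ρ u = 1) ∧
    ∀ u : ℝ, 1 ≤ u → u * ρ u = ∫ t in (u - 1)..u, ρ t

namespace Prop2Aux
open MeasureTheory intervalIntegral Set


lemma engine {f₁ f₂ : ℝ → ℝ} (h₁ : Continuous f₁) (h₂ : Continuous f₂)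
    (init : ∀ x : ℝ, x ≤ 1 → 0 ≤ f₁ x ∧ 0 ≤ f₂ x)
    (key : ∀ u : ℝ, 1 < u → (∀ x : ℝ, x ≤ u - 1 → 0 ≤ f₁ x ∧ 0 ≤ f₂ x) →
      (∫ x in (u-1)..u, f₁ x) ≤ u * f₁ u ∧ (∫ x in (u-1)..u, f₂ x) ≤ u * f₂ u) :
    ∀ x : ℝ, 0 ≤ f₁ x ∧ 0 ≤ f₂ x := by
  by_contra hcon
  push_neg at hcon
  set q : ℝ → ℝ := fun x => min (f₁ x) (f₂ x) with hq
  have hqc : Continuous q := h₁.min h₂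
  have hqinit : ∀ x : ℝ, x ≤ 1 → 0 ≤ q x := fun x hx => le_min (init x hx).1 (init x hx).2
  have hbadne : {x : ℝ | q x < 0}.Nonempty := by
    obtain ⟨x, hx⟩ := hcon
    by_cases h1 : 0 ≤ f₁ x
    · exact ⟨x, lt_of_le_of_lt (min_le_right _ _) (hx h1)⟩
    · exact ⟨x, lt_of_le_of_lt (min_le_left _ _) (not_le.mp h1)⟩
  set bad := {x : ℝ | q x < 0} with hbadif
  have hbdd : BddBelow bad := by
    refine ⟨1, fun x hx => ?_⟩
    by_contra hx1
    exact absurd (hqinit x (not_le.mp hx1).le) (not_le.mpr hx)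
  set t₀ := sInf bad with ht₀
  have ht₀ge : (1:ℝ) ≤ t₀ := le_csInf hbadne (fun x hx => by
    by_contra hx1
    exact absurd (hqinit x (not_le.mp hx1).le) (not_le.mpr hx))
  have ht₀pos : 0 ≤ q t₀ := by
    by_contra hneg
    rw [not_le] at hneg
    have : ∀ᶠ y in nhds t₀, q y < 0 := hqc.continuousAt.eventually_lt continuous_const.continuousAt hneg
    obtain ⟨ε, hε, hball⟩ := Metric.eventually_nhds_iff.mp this
    have hb : (t₀ - ε/2) ∈ bad := by
      apply hball
      rw [Real.dist_eq, show t₀ - ε/2 - t₀ = -(ε/2) by ring, abs_neg, abs_of_pos (by linarith)]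
      linarith
    have := csInf_le hbdd hb
    linarith
  have hpos : ∀ x : ℝ, x ≤ t₀ → 0 ≤ f₁ x ∧ 0 ≤ f₂ x := by
    intro x hx
    rcases eq_or_lt_of_le hx with rfl | hlt
    · exact ⟨le_trans ht₀pos (min_le_left _ _) |>.trans (le_refl _) |> (fun _ => ht₀pos.trans (min_le_left _ _)) , ht₀pos.trans (min_le_right _ _)⟩
    · have hxnb : x ∉ bad := fun hmem => absurd (csInf_le hbdd hmem) (not_le.mpr hlt)
      rw [hbadif, Set.mem_setOf_eq, not_lt] at hxnb
      exact ⟨hxnb.trans (min_le_left _ _), hxnb.trans (min_le_right _ _)⟩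
  -- a bad point within distance 1/2
  have hbad2 : ∃ b ∈ bad, b < t₀ + 1/2 := by
    by_contra hno
    push_neg at hno
    have : t₀ + 1/2 ≤ t₀ := le_csInf hbadne (fun b hb => hno b hb)
    linarith
  obtain ⟨b, hbbad, hblt⟩ := hbad2
  have hbge : t₀ ≤ b := csInf_le hbdd hbbad
  -- minimum of q on [t₀, t₀+1/2]
  obtain ⟨u₁, hu₁mem, hu₁min⟩ :=
    isCompact_Icc.exists_isMinOn (Set.nonempty_Icc.mpr (by linarith)) (hqc.continuousOn (s := Icc t₀ (t₀+1/2)))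
  have hqu₁ : q u₁ < 0 := lt_of_le_of_lt (hu₁min ⟨hbge, hblt.le⟩) hbbad
  have hu₁gt : t₀ < u₁ := by
    rcases eq_or_lt_of_le hu₁mem.1 with h | h
    · exfalso; rw [h] at ht₀pos; linarith
    · exact h
  have hu₁gt1 : 1 < u₁ := lt_of_le_of_lt ht₀ge hu₁gt
  have hkeyhyp : ∀ x : ℝ, x ≤ u₁ - 1 → 0 ≤ f₁ x ∧ 0 ≤ f₂ x := by
    intro x hx
    apply hpos
    have : u₁ ≤ t₀ + 1/2 := hu₁mem.2
    linarith
  have hkey := key u₁ hu₁gt1 hkeyhyp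
  -- pick the coordinate achieving the min
  have main : ∀ (f : ℝ → ℝ), Continuous f → (∀ x : ℝ, x ≤ t₀ → 0 ≤ f x) →
      (∀ x ∈ Icc t₀ (t₀+1/2), q u₁ ≤ f x) →
      (∫ x in (u₁-1)..u₁, f x) ≤ u₁ * f u₁ → f u₁ = q u₁ → False := by
    intro f hfc hfpos hflb hfint hfeq
    have hsplit : (∫ x in (u₁-1)..u₁, f x) =
        (∫ x in (u₁-1)..t₀, f x) + ∫ x in t₀..u₁, f x := by
      rw [intervalIntegral.integral_add_adjacent_intervals] <;>
        exact hfc.intervalIntegrable _ _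
    have h1 : 0 ≤ ∫ x in (u₁-1)..t₀, f x := by
      apply intervalIntegral.integral_nonneg (by linarith [hu₁mem.2])
      intro x hx; exact hfpos x hx.2
    have h2 : (u₁ - t₀) * q u₁ ≤ ∫ x in t₀..u₁, f x := by
      have := intervalIntegral.integral_mono_on (μ := MeasureTheory.volume) (a := t₀) (b := u₁) hu₁gt.le
        (continuous_const.intervalIntegrable _ _) (hfc.intervalIntegrable _ _)
        (fun x hx => hflb x ⟨hx.1, le_trans hx.2 hu₁mem.2⟩)
      simpa using this
    have : (u₁ - t₀) * q u₁ ≤ u₁ * q u₁ := by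
      calc (u₁ - t₀) * q u₁ ≤ ∫ x in t₀..u₁, f x := h2
        _ ≤ (∫ x in (u₁-1)..t₀, f x) + ∫ x in t₀..u₁, f x := by linarith
        _ = ∫ x in (u₁-1)..u₁, f x := hsplit.symm
        _ ≤ u₁ * f u₁ := hfint
        _ = u₁ * q u₁ := by rw [hfeq]
    nlinarith [ht₀ge, hqu₁]
  rcases min_choice (f₁ u₁) (f₂ u₁) with h | h
  · exact main f₁ h₁ (fun x hx => (hpos x hx).1) (fun x hx => le_trans (hu₁min hx) (min_le_left _ _)) hkey.1 h.symm
  · exact main f₂ h₂ (fun x hx => (hpos x hx).2) (fun x hx => le_trans (hu₁min hx) (min_le_right _ _)) hkey.2 h.symm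


noncomputable def pos (f : ℝ → ℝ) : ℝ → ℝ := fun x => f (max x 0)

lemma continuous_pos {f : ℝ → ℝ} (hf : ContinuousOn f (Set.Ici 0)) : Continuous (pos f) :=
  hf.comp_continuous (continuous_id.max continuous_const) (fun x => le_max_right x 0)

lemma pos_eq {f : ℝ → ℝ} {x : ℝ} (hx : 0 ≤ x) : pos f x = f x := by
  simp [pos, max_eq_left hx]

noncomputable def ker (ρ : ℝ → ℝ) (x t : ℝ) : ℝ := pos ρ (x - t) / max t 1

lemma continuous_ker {ρ : ℝ → ℝ} (hρ : ContinuousOn ρ (Set.Ici 0)) :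
    Continuous (Function.uncurry (ker ρ)) := by
  apply Continuous.div
  · exact (continuous_pos hρ).comp (continuous_fst.sub continuous_snd)
  · exact (continuous_snd.max continuous_const)
  · intro p; have : (1:ℝ) ≤ max p.2 1 := le_max_right _ _; positivity

noncomputable def gf (ρ : ℝ → ℝ) : ℝ → ℝ := fun x => ∫ t in (1:ℝ)..(max x 1), ker ρ x t

lemma continuous_gf {ρ : ℝ → ℝ} (hρ : ContinuousOn ρ (Set.Ici 0)) : Continuous (gf ρ) :=
  intervalIntegral.continuous_parametric_intervalIntegral_of_continuous
    (continuous_ker hρ) (continuous_id.max continuous_const)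

lemma gf_of_le_one {ρ : ℝ → ℝ} {x : ℝ} (hx : x ≤ 1) : gf ρ x = 0 := by
  simp [gf, max_eq_right hx]

noncomputable def W (ρ : ℝ → ℝ) : ℝ → ℝ := fun s => ∫ τ in (0:ℝ)..s, pos ρ τ

lemma continuous_W {ρ : ℝ → ℝ} (hρ : ContinuousOn ρ (Set.Ici 0)) : Continuous (W ρ) :=
  intervalIntegral.continuous_primitive
    (fun a b => (continuous_pos hρ).intervalIntegrable a b) 0

/-- The Fubini step. -/
lemma fubini_gf {ρ : ℝ → ℝ} (hρ : ContinuousOn ρ (Set.Ici 0)) {x : ℝ} (hx : 1 ≤ x) :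
    ∫ y in (0:ℝ)..x, gf ρ y = ∫ t in (1:ℝ)..x, W ρ (x - t) / max t 1 := by
  have hkerc := continuous_ker hρ
  -- step 1 : kill [0,1]
  have h01 : (∫ y in (0:ℝ)..1, gf ρ y) = 0 := by
    rw [intervalIntegral.integral_congr (g := fun _ => (0:ℝ))
      (fun y hy => gf_of_le_one (by rcases hy with ⟨h1, h2⟩; simpa using h2))]
    simp
  have hsplit : (∫ y in (0:ℝ)..x, gf ρ y) = ∫ y in (1:ℝ)..x, gf ρ y := by
    rw [← intervalIntegral.integral_add_adjacent_intervals
      ((continuous_gf hρ).intervalIntegrable 0 1) ((continuous_gf hρ).intervalIntegrable 1 x), h01,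
      zero_add]
  rw [hsplit]
  -- step 2 : set-integral form, with indicator
  set F : ℝ → ℝ → ℝ := fun y t => Set.indicator (Set.Iic y) (fun t => ker ρ y t) t with hF
  have hFmeas : AEStronglyMeasurable (Function.uncurry F)
      ((volume.restrict (Ioc 1 x)).prod (volume.restrict (Ioc 1 x))) := by
    have : Function.uncurry F = Set.indicator {p : ℝ × ℝ | p.2 ≤ p.1}
        (Function.uncurry (ker ρ)) := by
      ext ⟨y, t⟩
      simp only [Function.uncurry, hF, Set.indicator, Set.mem_Iic, Set.mem_setOf_eq]
    rw [this]
    exact (hkerc.aestronglyMeasurable.indicator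
      (isClosed_le continuous_snd continuous_fst).measurableSet)
  have hFint : Integrable (Function.uncurry F)
      ((volume.restrict (Ioc 1 x)).prod (volume.restrict (Ioc 1 x))) := by
    obtain ⟨M, hM⟩ := (isCompact_Icc.prod isCompact_Icc :
        IsCompact ((Icc (1:ℝ) x) ×ˢ (Icc (1:ℝ) x))).exists_bound_of_continuousOn
      hkerc.continuousOn
    refine ⟨hFmeas, ?_⟩
    apply MeasureTheory.HasFiniteIntegral.of_bounded (C := max M 0)
    rw [Measure.prod_restrict]
    rw [MeasureTheory.ae_restrict_iff' ((measurableSet_Ioc).prod (measurableSet_Ioc))]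
    filter_upwards with p hp
    rcases hp with ⟨hp1, hp2⟩
    have hmem : p ∈ Icc (1:ℝ) x ×ˢ Icc (1:ℝ) x := ⟨⟨hp1.1.le, hp1.2⟩, ⟨hp2.1.le, hp2.2⟩⟩
    by_cases hin : p.2 ≤ p.1
    · have hEq : Function.uncurry F p = Function.uncurry (ker ρ) p := by
        simp [Function.uncurry, hF, Set.indicator_of_mem, Set.mem_Iic, hin]
      rw [hEq]; exact le_trans (hM p hmem) (le_max_left _ _)
    · have hEq : Function.uncurry F p = 0 := by
        simp [Function.uncurry, hF, Set.indicator_of_notMem, Set.mem_Iic, hin]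
      rw [hEq]; simp
  calc ∫ y in (1:ℝ)..x, gf ρ y
      = ∫ y in Ioc (1:ℝ) x, (∫ t in Ioc (1:ℝ) x, F y t) := by
        rw [intervalIntegral.integral_of_le hx]
        apply setIntegral_congr_fun measurableSet_Ioc
        intro y hy
        have hymax : max y 1 = y := max_eq_left hy.1.le
        have h1 : gf ρ y = ∫ t in Ioc (1:ℝ) y, ker ρ y t := by
          rw [gf, hymax, intervalIntegral.integral_of_le hy.1.le]
        show gf ρ y = ∫ t in Ioc (1:ℝ) x, F y t
        simp only [hF]
        rw [h1, setIntegral_indicator measurableSet_Iic, Set.Ioc_inter_Iic,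
          min_eq_right hy.2]
      _ = ∫ t in Ioc (1:ℝ) x, (∫ y in Ioc (1:ℝ) x, F y t) :=
        MeasureTheory.integral_integral_swap hFint
      _ = ∫ t in (1:ℝ)..x, W ρ (x - t) / max t 1 := by
        rw [intervalIntegral.integral_of_le hx]
        apply setIntegral_congr_fun measurableSet_Ioc
        intro t ht
        show (∫ y in Ioc (1:ℝ) x, F y t) = W ρ (x - t) / max t 1
        have hFy : (fun y => F y t) = Set.indicator (Ici t) (fun y => ker ρ y t) := by
          funext y
          simp only [hF, Set.indicator, Set.mem_Iic, Set.mem_Ici]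
        rw [show (∫ y in Ioc (1:ℝ) x, F y t) = ∫ y in Ioc (1:ℝ) x, Set.indicator (Ici t) (fun y => ker ρ y t) y from by rw [← hFy],
          setIntegral_indicator measurableSet_Ici]
        have hseteq : Ioc (1:ℝ) x ∩ Ici t = Icc t x := by
          ext y
          simp only [Set.mem_inter_iff, Set.mem_Ioc, Set.mem_Ici, Set.mem_Icc]
          constructor
          · rintro ⟨⟨_, h2⟩, h3⟩; exact ⟨h3, h2⟩
          · rintro ⟨h1, h2⟩; exact ⟨⟨lt_of_lt_of_le ht.1 h1, h2⟩, h1⟩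
        rw [hseteq, MeasureTheory.integral_Icc_eq_integral_Ioc,
          ← intervalIntegral.integral_of_le ht.2]
        have : (∫ y in t..x, ker ρ y t) = ∫ y in t..x, pos ρ (y - t) / max t 1 := rfl
        rw [this, intervalIntegral.integral_div, intervalIntegral.integral_comp_sub_right _ t]
        simp [W]

lemma pos_one (hρ : IsDickman ρ) {x : ℝ} (hx : x ≤ 1) : pos ρ x = 1 :=
  hρ.2.1 _ (le_max_right _ _) (max_le hx zero_le_one)

lemma pos_dickman (hρ : IsDickman ρ) {u : ℝ} (hu : 1 ≤ u) :
    u * pos ρ u = ∫ x in (u-1)..u, pos ρ x := by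
  rw [pos_eq (by linarith : (0:ℝ) ≤ u), hρ.2.2 u hu]
  apply intervalIntegral.integral_congr
  intro x hx
  have hmin : min (u-1) u = u - 1 := min_eq_left (by linarith)
  have hx1 : u - 1 ≤ x := by rw [Set.uIcc, hmin] at hx; exact hx.1
  show ρ x = pos ρ x
  exact (pos_eq (by linarith)).symm

lemma W_diff (hρ : IsDickman ρ) {y : ℝ} (hy : 0 ≤ y) :
    W ρ y - W ρ (max (y - 1) 0) = y * pos ρ y := by
  rcases le_or_gt 1 y with h | h
  · rw [max_eq_left (by linarith), pos_dickman hρ h]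
    exact intervalIntegral.integral_interval_sub_left (μ := volume)
      ((continuous_pos hρ.1).intervalIntegrable 0 y)
      ((continuous_pos hρ.1).intervalIntegrable 0 (y-1))
  · rw [max_eq_right (by linarith), pos_one hρ h.le, mul_one]
    have h0 : W ρ 0 = 0 := intervalIntegral.integral_same
    rw [h0, sub_zero, W]
    rw [intervalIntegral.integral_congr (g := fun _ => (1:ℝ)) (fun τ hτ => by
      rcases hτ with ⟨_, h2⟩
      rw [max_def] at h2
      split_ifs at h2 with hc
      · exact pos_one hρ (by linarith)
      · exact pos_one hρ (by push_neg at hc; linarith))]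
    simp

lemma gf_window (hρ : IsDickman ρ) {u : ℝ} (hu : 1 < u) :
    ∫ x in (u-1)..u, gf ρ x = ∫ t in (1:ℝ)..u, (u - t) * ker ρ u t := by
  have hcg := continuous_gf hρ.1
  have hcW := continuous_W (ρ := ρ) hρ.1
  have hsub : (∫ x in (u-1)..u, gf ρ x) =
      (∫ x in (0:ℝ)..u, gf ρ x) - ∫ x in (0:ℝ)..(u-1), gf ρ x :=
    (intervalIntegral.integral_interval_sub_left
      (hcg.intervalIntegrable 0 u) (hcg.intervalIntegrable 0 (u-1))).symm
  have hcont2 : Continuous (fun t => W ρ (max (u - 1 - t) 0) / max t 1) := by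
    apply Continuous.div
    · exact hcW.comp ((continuous_const.sub continuous_id).max continuous_const)
    · exact continuous_id.max continuous_const
    · intro t; have : (1:ℝ) ≤ max t 1 := le_max_right _ _; positivity
  have hstep : (∫ x in (0:ℝ)..(u-1), gf ρ x) =
      ∫ t in (1:ℝ)..u, W ρ (max (u - 1 - t) 0) / max t 1 := by
    rcases le_or_gt u 2 with h2 | h2
    · have hL : (∫ x in (0:ℝ)..(u-1), gf ρ x) = 0 := by
        rw [intervalIntegral.integral_congr (g := fun _ => (0:ℝ)) (fun x hx => by
          rcases hx with ⟨_, hxr⟩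
          have : x ≤ u - 1 := le_trans hxr (by rw [max_def]; split_ifs <;> linarith)
          simp [gf, max_eq_right (show x ≤ 1 by linarith)])]
        simp
      have hR : (∫ t in (1:ℝ)..u, W ρ (max (u - 1 - t) 0) / max t 1) = 0 := by
        rw [intervalIntegral.integral_congr (g := fun _ => (0:ℝ)) (fun t ht => by
          rcases ht with ⟨htl, _⟩
          have h1t : 1 ≤ t := le_trans (by rw [min_def]; split_ifs <;> linarith) htl
          have : max (u - 1 - t) 0 = 0 := max_eq_right (by linarith)
          rw [this]
          simp [W])]
        simp
      rw [hL, hR]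
    · have hu1 : (1:ℝ) ≤ u - 1 := by linarith
      rw [fubini_gf hρ.1 hu1]
      have hadj : (∫ t in (1:ℝ)..u, W ρ (max (u - 1 - t) 0) / max t 1) =
          (∫ t in (1:ℝ)..(u-1), W ρ (max (u - 1 - t) 0) / max t 1) +
          ∫ t in (u-1)..u, W ρ (max (u - 1 - t) 0) / max t 1 := by
        rw [intervalIntegral.integral_add_adjacent_intervals
          (hcont2.intervalIntegrable _ _) (hcont2.intervalIntegrable _ _)]
      have hz : (∫ t in (u-1)..u, W ρ (max (u - 1 - t) 0) / max t 1) = 0 := by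
        rw [intervalIntegral.integral_congr (g := fun _ => (0:ℝ)) (fun t ht => by
          rcases ht with ⟨htl, _⟩
          have : u - 1 ≤ t := le_trans (by rw [min_def]; split_ifs <;> linarith) htl
          rw [max_eq_right (by linarith)]
          simp [W])]
        simp
      have hcg1 : (∫ t in (1:ℝ)..(u-1), W ρ (max (u - 1 - t) 0) / max t 1) =
          ∫ t in (1:ℝ)..(u-1), W ρ (u - 1 - t) / max t 1 := by
        apply intervalIntegral.integral_congr
        intro t ht
        rcases ht with ⟨htl, htr⟩
        have h1t : 1 ≤ t := le_trans (by rw [min_def]; split_ifs <;> linarith) htl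
        have h2t : t ≤ u - 1 := le_trans htr (by rw [max_def]; split_ifs <;> linarith)
        show W ρ (max (u - 1 - t) 0) / max t 1 = W ρ (u - 1 - t) / max t 1
        rw [max_eq_left (by linarith : (0:ℝ) ≤ u - 1 - t)]
      rw [hadj, hz, add_zero, hcg1]
  rw [hsub, fubini_gf hρ.1 (by linarith : (1:ℝ) ≤ u), hstep]
  rw [← intervalIntegral.integral_sub]
  · apply intervalIntegral.integral_congr
    intro t ht
    rcases ht with ⟨htl, htr⟩
    have h1t : 1 ≤ t := le_trans (by rw [min_def]; split_ifs <;> linarith) htl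
    have h2t : t ≤ u := le_trans htr (by rw [max_def]; split_ifs <;> linarith)
    have hyd := W_diff hρ (show (0:ℝ) ≤ u - t by linarith)
    have heq : u - t - 1 = u - 1 - t := by ring
    rw [heq] at hyd
    show W ρ (u - t) / max t 1 - W ρ (max (u - 1 - t) 0) / max t 1 = (u - t) * ker ρ u t
    rw [div_sub_div_same, hyd, ker, mul_div_assoc]
  · apply Continuous.intervalIntegrable
    apply Continuous.div
    · exact hcW.comp (continuous_const.sub continuous_id)
    · exact continuous_id.max continuous_const
    · intro t; have : (1:ℝ) ≤ max t 1 := le_max_right _ _; positivity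
  · exact hcont2.intervalIntegrable _ _

lemma continuous_ker2 {ρ : ℝ → ℝ} (hρ : ContinuousOn ρ (Set.Ici 0)) (u : ℝ) :
    Continuous (fun t => ker ρ u t) := by
  apply Continuous.div
  · exact (continuous_pos hρ).comp (continuous_const.sub continuous_id)
  · exact continuous_id.max continuous_const
  · intro t; have : (1:ℝ) ≤ max t 1 := le_max_right _ _; positivity

/-- the key renewal identity for gf -/
lemma gf_eq {ρ : ℝ → ℝ} (hρ : IsDickman ρ) {u : ℝ} (hu : 1 < u) :
    u * gf ρ u = (∫ x in (u-1)..u, gf ρ x) + ∫ s in (0:ℝ)..(u-1), pos ρ s := by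
  have hker := continuous_ker2 hρ.1 u
  have h1 : u * gf ρ u = ∫ t in (1:ℝ)..u, u * ker ρ u t := by
    rw [gf, max_eq_left (by linarith : (1:ℝ) ≤ u), intervalIntegral.integral_const_mul]
  have h2 : (∫ t in (1:ℝ)..u, u * ker ρ u t) =
      ∫ t in (1:ℝ)..u, ((u - t) * ker ρ u t + pos ρ (u - t)) := by
    apply intervalIntegral.integral_congr
    intro t ht
    have h1t : 1 ≤ t := by
      rcases ht with ⟨htl, _⟩
      exact le_trans (by rw [min_eq_left (by linarith : (1:ℝ) ≤ u)]) htl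
    show u * ker ρ u t = (u - t) * ker ρ u t + pos ρ (u - t)
    rw [ker, max_eq_left h1t]
    have ht0 : (0:ℝ) < t := by linarith
    field_simp
    ring
  have h3 : (∫ t in (1:ℝ)..u, ((u - t) * ker ρ u t + pos ρ (u - t))) =
      (∫ t in (1:ℝ)..u, (u - t) * ker ρ u t) + ∫ t in (1:ℝ)..u, pos ρ (u - t) := by
    apply intervalIntegral.integral_add
    · exact ((continuous_const.sub continuous_id).mul hker).intervalIntegrable _ _
    · exact ((continuous_pos hρ.1).comp (continuous_const.sub continuous_id)).intervalIntegrable _ _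
  have h4 : (∫ t in (1:ℝ)..u, pos ρ (u - t)) = ∫ s in (0:ℝ)..(u-1), pos ρ s := by
    rw [intervalIntegral.integral_comp_sub_left (fun s => pos ρ s) u, sub_self]
  rw [h1, h2, h3, h4, gf_window hρ hu]

/-- the unfolded sigma equation -/
lemma sigma_eq {δ : ℝ} {σ : ℝ → ℝ} (hσ : IsDeltaSolution δ σ) {u : ℝ} (hu : 1 < u) :
    u * pos σ u = (∫ x in (u-1)..u, pos σ x) - δ * ∫ x in (0:ℝ)..(u-1), pos σ x := by
  have hcp : Continuous (pos σ) := continuous_pos hσ.1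
  have h := hσ.2.2 u hu
  have horig : (∫ t in (0:ℝ)..u, σ (u - t) * chiDelta δ t) =
      ∫ t in (0:ℝ)..u, pos σ (u - t) * chiDelta δ t := by
    apply intervalIntegral.integral_congr
    intro t ht
    have htu : t ≤ u := by
      rcases ht with ⟨_, htr⟩
      exact le_trans htr (by rw [max_eq_right (by linarith : (0:ℝ) ≤ u)])
    show σ (u - t) * chiDelta δ t = pos σ (u - t) * chiDelta δ t
    rw [pos_eq (by linarith : (0:ℝ) ≤ u - t)]
  -- integrability of the two pieces
  have hcomp : Continuous (fun t : ℝ => pos σ (u - t)) :=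
    hcp.comp (continuous_const.sub continuous_id)
  have hint1 : IntervalIntegrable (fun t => pos σ (u - t) * chiDelta δ t) volume 0 1 := by
    rw [intervalIntegrable_iff, Set.uIoc_of_le (zero_le_one)]
    have base : IntegrableOn (fun t : ℝ => pos σ (u - t)) (Ioc 0 1) volume :=
      hcomp.integrableOn_Ioc
    exact base.congr_fun (fun t ht => by
      simp [chiDelta, if_pos ht.2]) measurableSet_Ioc
  have hint2 : IntervalIntegrable (fun t => pos σ (u - t) * chiDelta δ t) volume 1 u := by
    rw [intervalIntegrable_iff, Set.uIoc_of_le hu.le]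
    have base : IntegrableOn (fun t : ℝ => pos σ (u - t) * (-δ)) (Ioc 1 u) volume :=
      (hcomp.mul continuous_const).integrableOn_Ioc
    exact base.congr_fun (fun t ht => by
      simp [chiDelta, if_neg (not_le.mpr ht.1)]) measurableSet_Ioc
  have hsplit : (∫ t in (0:ℝ)..u, pos σ (u - t) * chiDelta δ t) =
      (∫ t in (0:ℝ)..1, pos σ (u - t) * chiDelta δ t) +
      ∫ t in (1:ℝ)..u, pos σ (u - t) * chiDelta δ t :=
    (intervalIntegral.integral_add_adjacent_intervals hint1 hint2).symm
  have hp1 : (∫ t in (0:ℝ)..1, pos σ (u - t) * chiDelta δ t) = ∫ x in (u-1)..u, pos σ x := by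
    rw [intervalIntegral.integral_congr (g := fun t => pos σ (u - t)) (fun t ht => by
      have ht1 : t ≤ 1 := by
        rcases ht with ⟨_, htr⟩
        exact le_trans htr (by rw [max_eq_right (zero_le_one)])
      show pos σ (u - t) * chiDelta δ t = pos σ (u - t)
      simp [chiDelta, if_pos ht1])]
    rw [intervalIntegral.integral_comp_sub_left (fun s => pos σ s) u]
    norm_num
  have hp2 : (∫ t in (1:ℝ)..u, pos σ (u - t) * chiDelta δ t) =
      -δ * ∫ x in (0:ℝ)..(u-1), pos σ x := by
    have hc : (∫ t in (1:ℝ)..u, pos σ (u - t) * chiDelta δ t) =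
        ∫ t in (1:ℝ)..u, pos σ (u - t) * (-δ) := by
      rw [intervalIntegral.integral_of_le hu.le, intervalIntegral.integral_of_le hu.le]
      apply setIntegral_congr_fun measurableSet_Ioc
      intro t ht
      show pos σ (u - t) * chiDelta δ t = pos σ (u - t) * (-δ)
      simp [chiDelta, if_neg (not_le.mpr ht.1)]
    rw [hc, intervalIntegral.integral_mul_const,
      intervalIntegral.integral_comp_sub_left (fun s => pos σ s) u, sub_self]
    ring
  rw [pos_eq (by linarith : (0:ℝ) ≤ u), h, horig, hsplit, hp1, hp2]
  ring


lemma pos_one' {f : ℝ → ℝ} (h1 : ∀ u : ℝ, 0 ≤ u → u ≤ 1 → f u = 1) {x : ℝ} (hx : x ≤ 1) :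
    pos f x = 1 :=
  h1 _ (le_max_right _ _) (max_le hx zero_le_one)

lemma integral_lin3 {f g h : ℝ → ℝ} (hf : Continuous f) (hg : Continuous g) (hh : Continuous h)
    (p q r s a b : ℝ) :
    ∫ x in a..b, (p * f x + q * g x + r * h x + s) =
      p * (∫ x in a..b, f x) + q * (∫ x in a..b, g x) + r * (∫ x in a..b, h x) + s * (b - a) := by
  have h1 : IntervalIntegrable (fun x => p * f x) volume a b :=
    (continuous_const.mul hf).intervalIntegrable _ _
  have h2 : IntervalIntegrable (fun x => q * g x) volume a b :=
    (continuous_const.mul hg).intervalIntegrable _ _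
  have h3 : IntervalIntegrable (fun x => r * h x) volume a b :=
    (continuous_const.mul hh).intervalIntegrable _ _
  have h4 : IntervalIntegrable (fun _ : ℝ => s) volume a b :=
    continuous_const.intervalIntegrable _ _
  rw [intervalIntegral.integral_add ((h1.add h2).add h3) h4,
    intervalIntegral.integral_add (h1.add h2) h3,
    intervalIntegral.integral_add h1 h2,
    intervalIntegral.integral_const_mul, intervalIntegral.integral_const_mul,
    intervalIntegral.integral_const_mul, intervalIntegral.integral_const]
  simp [smul_eq_mul]
  ring

lemma gf_nonneg {ρ : ℝ → ℝ} (hρ : IsDickman ρ) (hRpos : ∀ x : ℝ, 0 ≤ pos ρ x) (x : ℝ) :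
    0 ≤ gf ρ x := by
  apply intervalIntegral.integral_nonneg (le_max_right x 1)
  intro t _
  have h1 : (1:ℝ) ≤ max t 1 := le_max_right _ _
  exact div_nonneg (hRpos _) (by linarith)

end Prop2Aux

open Prop2Aux MeasureTheory intervalIntegral Set in
theorem prop2_rho_approx (δ : ℝ) (hδ0 : 0 < δ) (hδ1 : δ ≤ 1)
    (σ : ℝ → ℝ) (hσ : IsDeltaSolution δ σ) (ρ : ℝ → ℝ) (hρ : IsDickman ρ) :
    ∀ u : ℝ, 1 ≤ u →
      |σ u - (ρ u - δ * ∫ t in (1:ℝ)..u, ρ (u - t) / t)| ≤ δ ^ 2 := by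
  set S := pos σ with hSdef
  set R := pos ρ with hRdef
  set G := gf ρ with hGdef
  have hScont : Continuous S := continuous_pos hσ.1
  have hRcont : Continuous R := continuous_pos hρ.1
  have hGcont : Continuous G := continuous_gf hρ.1
  -- positivity of R
  have hRpos : ∀ x : ℝ, 0 ≤ R x := by
    intro x
    refine (engine (f₁ := R) (f₂ := R) hRcont hRcont ?_ ?_ x).1
    · intro y hy
      constructor <;> · rw [hRdef, pos_one' hρ.2.1 hy]; norm_num
    · intro u hu _
      constructor <;>
      · exact le_of_eq (pos_dickman hρ hu.le).symm
  have hGpos : ∀ x : ℝ, 0 ≤ G x := gf_nonneg hρ hRpos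
  -- the error and barrier functions
  set Y : ℝ → ℝ := fun x => (-1) * S x + (1 - δ^2) * R x + (-(δ^2 + δ)) * G x + δ^2 with hYdef
  set Z : ℝ → ℝ := fun x => 1 * S x + (-(1 + δ^2)) * R x + (δ - δ^2) * G x + δ^2 with hZdef
  have hYcont : Continuous Y := by
    apply Continuous.add _ continuous_const
    exact ((continuous_const.mul hScont).add (continuous_const.mul hRcont)).add
      (continuous_const.mul hGcont)
  have hZcont : Continuous Z := by
    apply Continuous.add _ continuous_const
    exact ((continuous_const.mul hScont).add (continuous_const.mul hRcont)).add
      (continuous_const.mul hGcont)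
  -- positivity of Y and Z via the engine
  have hYZ : ∀ x : ℝ, 0 ≤ Y x ∧ 0 ≤ Z x := by
    apply engine hYcont hZcont
    · intro x hx
      have hs : S x = 1 := pos_one' hσ.2.1 hx
      have hr : R x = 1 := pos_one' hρ.2.1 hx
      have hg : G x = 0 := gf_of_le_one hx
      have hYx : Y x = 0 := by simp only [hYdef, hs, hr, hg]; ring
      have hZx : Z x = 0 := by simp only [hZdef, hs, hr, hg]; ring
      exact ⟨le_of_eq hYx.symm, le_of_eq hZx.symm⟩
    · intro u hu hprev
      have hu1 : (1:ℝ) ≤ u := hu.le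
      have hS := sigma_eq hσ hu
      have hR := pos_dickman hρ hu1
      have hG := gf_eq hρ hu
      set a1 := ∫ x in (u-1)..u, S x with ha1
      set a0 := ∫ x in (0:ℝ)..(u-1), S x with ha0
      set b1 := ∫ x in (u-1)..u, R x with hb1
      set b0 := ∫ x in (0:ℝ)..(u-1), R x with hb0
      set c1 := ∫ x in (u-1)..u, G x with hc1
      set c0 := ∫ x in (0:ℝ)..(u-1), G x with hc0
      have hYint : (∫ x in (u-1)..u, Y x) =
          (-1) * a1 + (1 - δ^2) * b1 + (-(δ^2 + δ)) * c1 + δ^2 * (u - (u-1)) := by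
        rw [hYdef]; exact integral_lin3 hScont hRcont hGcont _ _ _ _ _ _
      have hZint : (∫ x in (u-1)..u, Z x) =
          1 * a1 + (-(1 + δ^2)) * b1 + (δ - δ^2) * c1 + δ^2 * (u - (u-1)) := by
        rw [hZdef]; exact integral_lin3 hScont hRcont hGcont _ _ _ _ _ _
      -- the forcing terms
      have hJY : (∫ x in (0:ℝ)..(u-1), (δ * S x + (-(δ^2 + δ)) * R x + 0 * G x + δ^2)) =
          δ * a0 + (-(δ^2 + δ)) * b0 + 0 * c0 + δ^2 * ((u-1) - 0) :=
        integral_lin3 hScont hRcont hGcont _ _ _ _ _ _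
      have hJZ : (∫ x in (0:ℝ)..(u-1), ((-δ) * S x + (δ - δ^2) * R x + 0 * G x + δ^2)) =
          (-δ) * a0 + (δ - δ^2) * b0 + 0 * c0 + δ^2 * ((u-1) - 0) :=
        integral_lin3 hScont hRcont hGcont _ _ _ _ _ _
      have hJYpos : 0 ≤ ∫ x in (0:ℝ)..(u-1), (δ * S x + (-(δ^2 + δ)) * R x + 0 * G x + δ^2) := by
        apply intervalIntegral.integral_nonneg (by linarith)
        intro x hx
        have hx1 : x ≤ u - 1 := hx.2
        obtain ⟨hYx, hZx⟩ := hprev x hx1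
        have hGx := hGpos x
        have hexp : δ * S x + (-(δ^2 + δ)) * R x + 0 * G x + δ^2 =
            ((1 - δ) * Y x + (1 + δ) * Z x) / 2 := by
          rw [hYdef, hZdef]; ring
        rw [hexp]
        have h1 : 0 ≤ (1 - δ) * Y x := mul_nonneg (by linarith) hYx
        have h2 : 0 ≤ (1 + δ) * Z x := mul_nonneg (by linarith) hZx
        exact div_nonneg (add_nonneg h1 h2) (by norm_num)
      have hJZpos : 0 ≤ ∫ x in (0:ℝ)..(u-1), ((-δ) * S x + (δ - δ^2) * R x + 0 * G x + δ^2) := by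
        apply intervalIntegral.integral_nonneg (by linarith)
        intro x hx
        have hx1 : x ≤ u - 1 := hx.2
        obtain ⟨hYx, hZx⟩ := hprev x hx1
        have hGx := hGpos x
        have hexp : (-δ) * S x + (δ - δ^2) * R x + 0 * G x + δ^2 =
            ((1 + δ) * Y x + (1 - δ) * Z x) / 2 + 2 * δ^2 * G x := by
          rw [hYdef, hZdef]; ring
        rw [hexp]
        have h1 : 0 ≤ (1 + δ) * Y x := mul_nonneg (by linarith) hYx
        have h2 : 0 ≤ (1 - δ) * Z x := mul_nonneg (by linarith) hZx
        have h3 : 0 ≤ 2 * δ ^ 2 * G x := mul_nonneg (by positivity) hGx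
        exact add_nonneg (div_nonneg (add_nonneg h1 h2) (by norm_num)) h3
      constructor
      · have hkey : u * Y u = (∫ x in (u-1)..u, Y x) +
            ∫ x in (0:ℝ)..(u-1), (δ * S x + (-(δ^2 + δ)) * R x + 0 * G x + δ^2) := by
          rw [hYint, hJY, hYdef]
          show u * ((-1) * S u + (1 - δ^2) * R u + (-(δ^2 + δ)) * G u + δ^2) = _
          linear_combination (-1) * hS + (1 - δ^2) * hR + (-(δ^2 + δ)) * hG
        rw [hkey]
        linarith
      · have hkey : u * Z u = (∫ x in (u-1)..u, Z x) +
            ∫ x in (0:ℝ)..(u-1), ((-δ) * S x + (δ - δ^2) * R x + 0 * G x + δ^2) := by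
          rw [hZint, hJZ, hZdef]
          show u * (1 * S u + (-(1 + δ^2)) * R u + (δ - δ^2) * G u + δ^2) = _
          linear_combination 1 * hS + (-(1 + δ^2)) * hR + (δ - δ^2) * hG
        rw [hkey]
        linarith
  -- final assembly
  intro u hu
  have hu0 : (0:ℝ) ≤ u := by linarith
  have hGu : (∫ t in (1:ℝ)..u, ρ (u - t) / t) = G u := by
    rw [hGdef]
    show _ = gf ρ u
    simp only [gf]
    rw [max_eq_left hu]
    apply intervalIntegral.integral_congr
    intro t ht
    have h1t : 1 ≤ t := by
      rcases ht with ⟨htl, _⟩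
      exact le_trans (by rw [min_eq_left hu]) htl
    have h2t : t ≤ u := by
      rcases ht with ⟨_, htr⟩
      exact le_trans htr (by rw [max_eq_right hu])
    show ρ (u - t) / t = ker ρ u t
    rw [ker, pos_eq (by linarith : (0:ℝ) ≤ u - t), max_eq_left h1t]
  have hσu : σ u = S u := (pos_eq hu0).symm
  have hρu : ρ u = R u := (pos_eq hu0).symm
  rw [hGu, hσu, hρu]
  obtain ⟨hYu, hZu⟩ := hYZ u
  simp only [hYdef] at hYu
  simp only [hZdef] at hZu
  have hRu := hRpos u
  have hGu' := hGpos u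
  rw [abs_le]
  constructor
  · nlinarith
  · nlinarith
end
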